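/- arXiv:0801.2097 — 4 statements merged into one kernel-verified Lean document; each statement's English description precedes it below -/
import Mathlib

section
/- There exists a strictly increasing sequence of natural numbers e_0 < e_1 < e_2 < ⋯ such that W_{e_n} = {e_{n+1}} for every n. -/
/-- The e-th partial computable function in a standard numbering. -/
def phi (e : ℕ) : ℕ →. ℕ :=
  Nat.Partrec.Code.eval (Denumerable.ofNat Nat.Partrec.Code e)

/-- W e is the domain of the e-th partial computable function. -/
def W (e : ℕ) : Set ℕ := (phi e).Dom

/-!
By the recursion theorem with parameters there is a code `c` whose `n`-th curried instance
`curry c n` halts exactly on the index of `curry c (n + 1)`. Since the encoding of `curry c n`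
is strictly increasing in `n`, the indices `e n = encode (curry c n)` do the job.
-/

open Nat.Partrec Nat.Partrec.Code Encodable

theorem phi_encode (c : Code) : phi (encode c) = c.eval := by
  simp [phi, Denumerable.ofNat_encode]

theorem encode_comp_lt_comp_right (c : Code) {g₁ g₂ : Code} (h : encode g₁ < encode g₂) :
    encode (c.comp g₁) < encode (c.comp g₂) := by
  simp only [encodeCode_eq, encodeCode] at *
  have := Nat.pair_lt_pair_right c.encodeCode h
  omega

theorem encode_pair_lt_pair_left {f₁ f₂ : Code} (g : Code) (h : encode f₁ < encode f₂) :
    encode (f₁.pair g) < encode (f₂.pair g) := by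
  simp only [encodeCode_eq, encodeCode] at *
  have := Nat.pair_lt_pair_left g.encodeCode h
  omega

theorem encode_const_strictMono : StrictMono fun n => encode (Code.const n) :=
  strictMono_nat_of_lt_succ fun n => (encode_lt_comp Code.succ (Code.const n)).2

theorem encode_curry_strictMono (c : Code) : StrictMono fun n => encode (curry c n) :=
  fun _ _ hmn => encode_comp_lt_comp_right c (encode_pair_lt_pair_left Code.id
    (encode_const_strictMono hmn))

/-- Recursion theorem: the targets `t c n` may depend on the code `c` being constructed. -/
theorem exists_code_dom_eval_curry_eq_singleton {t : Code → ℕ → ℕ} (ht : Computable₂ t) :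
    ∃ c : Code, ∀ n, (curry c n).eval.Dom = {t c n} := by
  let F : Code → ℕ →. ℕ := fun c m =>
    ((bif decide (m.unpair.2 = t c m.unpair.1) then some 0 else none : Option ℕ) : Part ℕ)
  have hF : Partrec₂ F := by
    refine Computable.ofOption (Computable.cond ?_ (Computable.const _) (Computable.const _))
    exact (Primrec.eq.decide.to_comp).comp
      (Computable.snd.comp (Computable.unpair.comp Computable.snd))
      (ht.comp Computable.fst (Computable.fst.comp (Computable.unpair.comp Computable.snd)))
  obtain ⟨c, hc⟩ := fixed_point₂ hF
  refine ⟨c, fun n => Set.ext fun x => ?_⟩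
  by_cases hx : x = t c n <;> simp [PFun.mem_dom, eval_curry, hc, F, hx]

theorem stmt_1 :
    ∃ e : ℕ → ℕ, StrictMono e ∧ ∀ n : ℕ, W (e n) = {e (n + 1)} := by
  have ht : Computable₂ fun (c : Code) n => encode (curry c (n + 1)) :=
    Computable.encode.comp (primrec₂_curry.to_comp.comp Computable.fst
      (Computable.succ.comp Computable.snd))
  obtain ⟨c, hc⟩ := exists_code_dom_eval_curry_eq_singleton ht
  exact ⟨fun n => encode (curry c n), encode_curry_strictMono c,
    fun n => by simp only [W, phi_encode, hc]⟩
end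

section
/- For every n > 0 there exists a finite sequence e_0 < e_1 < ⋯ < e_n of natural numbers such that W_{e_i} = {e_{i+1}} for all i < n and W_{e_n} = {e_0}. -/
open Encodable

namespace Nat.Partrec.Code

theorem encodeCode_const_strictMono : StrictMono fun n => encodeCode (Code.const n) := by
  refine strictMono_nat_of_lt_succ fun k => ?_
  have hsucc : encodeCode (Code.const (k + 1)) =
      2 * (2 * Nat.pair 1 (encodeCode (Code.const k)) + 1) + 4 := rfl
  have := Nat.right_le_pair 1 (encodeCode (Code.const k))
  omega

theorem encodeCode_curry_strictMono (c : Code) : StrictMono fun n => encodeCode (curry c n) := by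
  intro i j hij
  have hcurry : ∀ k, encodeCode (curry c k) =
      2 * (2 * Nat.pair (encodeCode c)
        (2 * (2 * Nat.pair (encodeCode (Code.const k)) (encodeCode Code.id)) + 4) + 1) + 4 :=
    fun _ => rfl
  simp only [hcurry]
  have := Nat.pair_lt_pair_left (encodeCode Code.id)
    (show encodeCode (Code.const i) < encodeCode (Code.const j) from encodeCode_const_strictMono hij)
  have := Nat.pair_lt_pair_right (encodeCode c) (show
    2 * (2 * Nat.pair (encodeCode (Code.const i)) (encodeCode Code.id)) + 4 <
      2 * (2 * Nat.pair (encodeCode (Code.const j)) (encodeCode Code.id)) + 4 by omega)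
  omega

theorem exists_dom_eval_curry_eq_singleton {f : ℕ → ℕ} (hf : Computable f) :
    ∃ c : Code, ∀ i, (eval (curry c i)).Dom = {encode (curry c (f i))} := by
  let g : Code → ℕ →. ℕ := fun c y =>
    cond (decide (y.unpair.2 = encode (curry c (f y.unpair.1)))) (Part.some 0) Part.none
  have hg : Partrec₂ g := by
    have hdec : Computable fun p : Code × ℕ =>
        decide (p.2.unpair.2 = encode (curry p.1 (f p.2.unpair.1))) :=
      Primrec.eq.decide.to_comp.comp (Computable.snd.comp (Computable.unpair.comp Computable.snd))
        (Computable.encode.comp (primrec₂_curry.to_comp.comp Computable.fst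
          (hf.comp (Computable.fst.comp (Computable.unpair.comp Computable.snd)))))
    exact Partrec.cond hdec (Partrec.const' _) _root_.Partrec.none
  obtain ⟨c, hc⟩ := fixed_point₂ hg
  refine ⟨c, fun i => Set.ext fun x => ?_⟩
  change (eval (curry c i) x).Dom ↔ x = _
  rw [eval_curry, hc]
  by_cases h : x = encode (curry c (f i)) <;> simp [g, h]

end Nat.Partrec.Code

open Nat.Partrec in
theorem W_encode (c : Code) : W (encode c) = c.eval.Dom := by
  simp [W, phi]

theorem stmt_3_general (n : ℕ) :
    ∃ e : ℕ → ℕ, (∀ i < n, e i < e (i + 1)) ∧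
      (∀ i < n, W (e i) = {e (i + 1)}) ∧ W (e n) = {e 0} := by
  obtain ⟨c, hc⟩ := Nat.Partrec.Code.exists_dom_eval_curry_eq_singleton
    (f := fun i => (i + 1) % (n + 1)) (Primrec.nat_mod.comp Primrec.succ (Primrec.const _)).to_comp
  refine ⟨fun i => encode (c.curry i), fun i _ =>
    Nat.Partrec.Code.encodeCode_curry_strictMono c i.lt_succ_self, fun i hi => ?_, ?_⟩
  · rw [W_encode, hc, Nat.mod_eq_of_lt (by omega)]
  · rw [W_encode, hc, Nat.mod_self]

theorem stmt_3 (n : ℕ) (hn : 0 < n) :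
    ∃ e : ℕ → ℕ, (∀ i < n, e i < e (i + 1)) ∧
      (∀ i < n, W (e i) = {e (i + 1)}) ∧ W (e n) = {e 0} :=
  stmt_3_general n
end

section
/- There exists a computable strictly increasing sequence ⟨e_n : n ∈ ℕ⟩ such that for every n, W_{e_n} = {e_m : m > n}. -/
open Encodable

namespace Nat.Partrec.Code

theorem encode_pair_lt_pair_left {cf cf' : Code} (cg : Code) (h : encode cf < encode cf') :
    encode (pair cf cg) < encode (pair cf' cg) := by
  simp only [encodeCode_eq, encodeCode] at h ⊢
  have := Nat.pair_lt_pair_left (encodeCode cg) h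
  omega

theorem encode_comp_lt_comp_right (cf : Code) {cg cg' : Code} (h : encode cg < encode cg') :
    encode (comp cf cg) < encode (comp cf cg') := by
  simp only [encodeCode_eq, encodeCode] at h ⊢
  have := Nat.pair_lt_pair_right (encodeCode cf) h
  omega

theorem strictMono_encode_const : StrictMono fun n => encode (Code.const n) :=
  strictMono_nat_of_lt_succ fun n => (encode_lt_comp succ (Code.const n)).2

theorem strictMono_encode_curry (c : Code) : StrictMono fun n => encode (curry c n) :=
  fun _ _ h =>
    encode_comp_lt_comp_right c (encode_pair_lt_pair_left Code.id (strictMono_encode_const h))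

end Nat.Partrec.Code

open Nat.Partrec Code

def findIndexAfter (e : ℕ → ℕ) (n x : ℕ) : Part ℕ :=
  Nat.rfind fun m => Part.some (decide (n < m ∧ x = e m))

theorem findIndexAfter_dom (e : ℕ → ℕ) (n x : ℕ) :
    (findIndexAfter e n x).Dom ↔ ∃ m, n < m ∧ x = e m := by
  refine Nat.rfind_dom.trans ⟨fun ⟨m, hm, _⟩ => ⟨m, by simpa using hm⟩, fun ⟨m, hm⟩ => ?_⟩
  exact ⟨m, by simpa using hm, fun _ => trivial⟩

theorem partrec₂_findIndexAfter {α : Type*} [Primcodable α] {e : α → ℕ → ℕ}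
    (he : Computable₂ e) :
    Partrec₂ fun (a : α) (y : ℕ) => findIndexAfter (e a) y.unpair.1 y.unpair.2 := by
  have hlt : Computable fun q : (α × ℕ) × ℕ => decide (q.1.2.unpair.1 < q.2) :=
    (Primrec.nat_lt.comp (Primrec.fst.comp (Primrec.unpair.comp
      (Primrec.snd.comp Primrec.fst))) Primrec.snd).decide.to_comp
  have heq : Computable fun q : (α × ℕ) × ℕ => decide (q.1.2.unpair.2 = e q.1.1 q.2) :=
    Primrec.eq.decide.to_comp.comp
      (Computable.snd.comp (Computable.unpair.comp (Computable.snd.comp Computable.fst)))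
      (he.comp (Computable.fst.comp Computable.fst) Computable.snd)
  refine (Partrec.rfind (Primrec.and.to_comp.comp hlt heq).partrec.to₂).of_eq fun _ => ?_
  simp [findIndexAfter]

theorem exists_code_dom_eval_curry_iff {e : Code → ℕ → ℕ} (he : Computable₂ e) :
    ∃ c : Code, ∀ n x, (eval (curry c n) x).Dom ↔ ∃ m, n < m ∧ x = e c m := by
  obtain ⟨c, hc⟩ := fixed_point₂ (partrec₂_findIndexAfter he)
  refine ⟨c, fun n x => ?_⟩
  simpa only [eval_curry, hc, Nat.unpair_pair] using findIndexAfter_dom (e c) n x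

theorem stmt_4 :
    ∃ e : ℕ → ℕ, Computable e ∧ StrictMono e ∧
      ∀ n : ℕ, W (e n) = {x | ∃ m, n < m ∧ x = e m} := by
  have he : Computable₂ fun c n => encode (curry c n) :=
    (Primrec.encode.comp primrec₂_curry).to_comp
  obtain ⟨c, hc⟩ := exists_code_dom_eval_curry_iff he
  refine ⟨fun n => encode (curry c n), he.comp (Computable.const c) Computable.id,
    strictMono_encode_curry c, fun n => ?_⟩
  ext x
  simp only [W, phi, Denumerable.ofNat_encode]
  exact hc n x
end

section
/- If A is an infinite self-constructing set with one-to-one computable enumeration A = {a_n : n ∈ ℕ}, then there is a computable function f such that W_{f(e)} = {a_n : n ∈ W_e} for every e, and consequently φ_e is total if and only if W_{f(e)} is self-constructing. -/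
/-- A set is computably enumerable iff it is W e for some e. -/
def CE (A : Set ℕ) : Prop := ∃ e, W e = A

/-- A nonempty c.e. set A is self-constructing if W e = A for every e ∈ A. -/
def SelfConstructing (A : Set ℕ) : Prop :=
  A.Nonempty ∧ CE A ∧ ∀ e ∈ A, W e = A

/-! The index `f e` of the theorem computes `φ_e ∘ a⁻¹`, where the partial inverse `a⁻¹` searches
for the unique preimage; by the s-m-n theorem this index depends computably on `e`. Hence
`W (f e) = a '' W e`, which lies inside the self-constructing set `A = range a`. A self-constructing
subset of a self-constructing set must be the whole set, and `a '' W e = range a` means `W e = ℕ`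
because `a` is injective. -/

theorem partrec₂_phi : Partrec₂ phi :=
  Nat.Partrec.Code.eval_part.comp ((Computable.ofNat _).comp Computable.fst) Computable.snd

theorem exists_computable_phi_eq_bind {g : ℕ →. ℕ} (hg : Partrec g) :
    ∃ f : ℕ → ℕ, Computable f ∧ ∀ e x, phi (f e) x = (g x).bind fun y => phi e y := by
  have hG : Partrec fun p : ℕ => (g p.unpair.2).bind (phi p.unpair.1) :=
    (hg.comp (Computable.snd.comp Computable.unpair)).bind
      (partrec₂_phi.comp (Computable.fst.comp (Computable.unpair.comp Computable.fst))
        Computable.snd).to₂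
  obtain ⟨c, hc⟩ := Nat.Partrec.Code.exists_code.1 (Partrec.nat_iff.1 hG)
  obtain ⟨s, hs, hsmn⟩ := Nat.Partrec.Code.smn
  refine ⟨fun e => Encodable.encode (s c e),
    Computable.encode.comp (hs.comp (Computable.const c) Computable.id), fun e x => ?_⟩
  simp [phi, Denumerable.ofNat_encode, hsmn, hc]

def rfindInv (a : ℕ → ℕ) (m : ℕ) : Part ℕ :=
  Nat.rfind fun n => Part.some (decide (a n = m))

theorem Computable.partrec_rfindInv {a : ℕ → ℕ} (ha : Computable a) : Partrec (rfindInv a) :=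
  Partrec.rfind (Primrec.eq.decide.to_comp.comp (ha.comp Computable.snd) Computable.fst)

theorem Function.Injective.mem_rfindInv_iff {a : ℕ → ℕ} (ha : a.Injective) {m n : ℕ} :
    n ∈ rfindInv a m ↔ a n = m := by
  refine ⟨fun h => by simpa using Nat.rfind_spec h, ?_⟩
  rintro rfl
  have hdom : (rfindInv a (a n)).Dom := Nat.rfind_dom.2 ⟨n, by simp, fun _ => trivial⟩
  obtain ⟨k, hk⟩ := Part.dom_iff_mem.1 hdom
  have hkn : a k = a n := by simpa using Nat.rfind_spec hk
  exact ha hkn ▸ hk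

theorem exists_computable_W_eq_image {a : ℕ → ℕ} (hinj : a.Injective) (hcomp : Computable a) :
    ∃ f : ℕ → ℕ, Computable f ∧ ∀ e, W (f e) = a '' W e := by
  obtain ⟨f, hf, hphi⟩ := exists_computable_phi_eq_bind hcomp.partrec_rfindInv
  refine ⟨f, hf, fun e => Set.ext fun x => ?_⟩
  change (phi (f e) x).Dom ↔ x ∈ a '' W e
  rw [hphi, Part.bind_dom]
  constructor
  · rintro ⟨hx, hdom⟩
    exact ⟨_, hdom, hinj.mem_rfindInv_iff.1 (Part.get_mem hx)⟩
  · rintro ⟨n, hn, rfl⟩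
    have hmem : n ∈ rfindInv a (a n) := hinj.mem_rfindInv_iff.2 rfl
    exact ⟨hmem.1, by rwa [Part.get_eq_of_mem hmem]⟩

theorem SelfConstructing.selfConstructing_iff_eq_of_subset {A B : Set ℕ}
    (hA : SelfConstructing A) (hBA : B ⊆ A) : SelfConstructing B ↔ B = A :=
  ⟨fun ⟨⟨x, hx⟩, _, hB⟩ => (hB x hx).symm.trans (hA.2.2 x (hBA hx)), fun h => h ▸ hA⟩

theorem stmt_19_general (A : Set ℕ) (a : ℕ → ℕ)
    (hA : SelfConstructing A)
    (hinj : Function.Injective a) (hcomp : Computable a)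
    (hrange : Set.range a = A) :
    ∃ f : ℕ → ℕ, Computable f ∧
      (∀ e : ℕ, W (f e) = a '' (W e)) ∧
      ∀ e : ℕ, (∀ n : ℕ, (phi e n).Dom) ↔ SelfConstructing (W (f e)) := by
  obtain ⟨f, hf, hW⟩ := exists_computable_W_eq_image hinj hcomp
  refine ⟨f, hf, hW, fun e => ?_⟩
  subst hrange
  rw [hW, hA.selfConstructing_iff_eq_of_subset (Set.image_subset_range a _), ← Set.image_univ,
    (Set.image_injective.2 hinj).eq_iff, Set.eq_univ_iff_forall]
  rfl

theorem stmt_19 (A : Set ℕ) (a : ℕ → ℕ)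
    (hA : SelfConstructing A) (hinf : A.Infinite)
    (hinj : Function.Injective a) (hcomp : Computable a)
    (hrange : Set.range a = A) :
    ∃ f : ℕ → ℕ, Computable f ∧
      (∀ e : ℕ, W (f e) = a '' (W e)) ∧
      ∀ e : ℕ, (∀ n : ℕ, (phi e n).Dom) ↔ SelfConstructing (W (f e)) :=
  stmt_19_general A a hA hinj hcomp hrange
end
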